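/- arXiv:1312.2848 — 3 statements merged into one kernel-verified Lean document; each statement's English description precedes it below -/
import Mathlib

section
/- Let T = [A,B,C]_R be an I×J×K real tensor, where A ∈ ℝ^{I×R} and B ∈ ℝ^{J×R} have full column rank and the k-rank of C ∈ ℝ^{K×R} satisfies k_C ≥ 2. Then the rank of T equals R and the CPD of T is unique. -/
open scoped BigOperators

noncomputable section

/-- The k-rank of a matrix: the largest `k` such that every subset of `k` columns is
linearly independent. -/
noncomputable def kRank {α β : Type*} [Fintype α] [Fintype β] (A : Matrix α β ℝ) : ℕ :=
  sSup {k | k ≤ Fintype.card β ∧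
    ∀ s : Finset β, s.card = k → LinearIndependent ℝ fun j : s => fun i : α => A i j.1}

/-- The `I × J × K` tensor `[A, B, C]_R` built from factor matrices `A`, `B`, `C`:
`t i j k = ∑ r, A i r * B j r * C k r`. -/
def cpdTensor {I J K R : ℕ} (A : Matrix (Fin I) (Fin R) ℝ) (B : Matrix (Fin J) (Fin R) ℝ)
    (C : Matrix (Fin K) (Fin R) ℝ) : Fin I → Fin J → Fin K → ℝ :=
  fun i j k => ∑ r, A i r * B j r * C k r

/-- The rank of a third-order tensor: the minimal number of rank-1 terms whose sum is `T`. -/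
noncomputable def tensorRank {I J K : ℕ} (T : Fin I → Fin J → Fin K → ℝ) : ℕ :=
  sInf {n | ∃ A B C, T = cpdTensor (R := n) A B C}

/-- Uniqueness of the CPD with `R` terms: any two representations of `T` as a sum of `R`
rank-1 terms coincide up to a common permutation of the terms and scalings of the columns
whose product is `1` within each term. -/
def cpdUnique {I J K : ℕ} (R : ℕ) (T : Fin I → Fin J → Fin K → ℝ) : Prop :=
  ∀ (A A' : Matrix (Fin I) (Fin R) ℝ) (B B' : Matrix (Fin J) (Fin R) ℝ)
    (C C' : Matrix (Fin K) (Fin R) ℝ),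
    T = cpdTensor A B C → T = cpdTensor A' B' C' →
    ∃ (σ : Equiv.Perm (Fin R)) (la lb lc : Fin R → ℝ),
      (∀ r, la r * lb r * lc r = 1) ∧
      (∀ i r, A' i r = la r * A i (σ r)) ∧
      (∀ j r, B' j r = lb r * B j (σ r)) ∧
      (∀ k r, C' k r = lc r * C k (σ r))

/-!
The mode-1 unfolding of `T = [A, B, C]_R` is `A (B ⊙ C)ᵀ`, and the Khatri–Rao product `B ⊙ C`
has full column rank because `B` does and no column of `C` vanishes. Hence every decomposition
`T = [A', B', C']_n` gives `A = A' E` for some `E`, so `R = rank A ≤ n`.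

For `n = R` the matrix `P` with `A = A' P` is invertible, and so is its analogue for `B`.
Comparing the frontal slices `A diag(C k) Bᵀ` of the two decompositions then yields
`P diag(C k) = diag(C' k) Q`, i.e. `P t s • c_s = Q t s • c'_t` for the columns `c_s` of `C`
and `c'_t` of `C'`.
As the columns of `C` are pairwise independent, every row of `P` has exactly one nonzero entry,
so `P` and `Q` are monomial with a common permutation: this is the uniqueness of the CPD.
-/

open Matrix Function

section LinearAlgebra

variable {K : Type*} [Field K] {m n n' p : Type*} [Fintype n] [Fintype n'] [Fintype p]

theorem Matrix.mulVec_injective_of_rank_eq_card {A : Matrix m n K}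
    (h : A.rank = Fintype.card n) : Injective A.mulVec := by
  rw [mulVec_injective_iff, linearIndependent_iff_card_eq_finrank_span, Set.finrank,
    ← rank_eq_finrank_span_cols, h]

theorem Matrix.exists_mul_eq_one_of_mulVec_injective [DecidableEq n] {M : Matrix p n K}
    (hM : Injective M.mulVec) : ∃ L : Matrix n p K, L * M = 1 := by
  classical
  obtain ⟨g, hg⟩ := M.mulVecLin.exists_leftInverse_of_injective (LinearMap.ker_eq_bot.mpr hM)
  refine ⟨LinearMap.toMatrix' g, ?_⟩
  rw [← LinearMap.toMatrix'_toLin' M, ← LinearMap.toMatrix'_comp]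
  exact hg ▸ LinearMap.toMatrix'_id

theorem Matrix.exists_eq_mul_of_mul_transpose_eq [DecidableEq n] {A : Matrix m n K}
    {A' : Matrix m n' K} {M : Matrix p n K} {M' : Matrix p n' K} (hM : Injective M.mulVec)
    (h : A * Mᵀ = A' * M'ᵀ) : ∃ E : Matrix n' n K, A = A' * E := by
  obtain ⟨L, hL⟩ := exists_mul_eq_one_of_mulVec_injective hM
  refine ⟨M'ᵀ * Lᵀ, ?_⟩
  calc A = A * (L * M)ᵀ := by rw [hL, transpose_one, Matrix.mul_one]
    _ = A' * (M'ᵀ * Lᵀ) := by rw [transpose_mul, ← Matrix.mul_assoc, h, Matrix.mul_assoc]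

theorem Matrix.isUnit_of_eq_mul [DecidableEq n] {A : Matrix m n K} {A' : Matrix m n K}
    {E : Matrix n n K} (hA : Injective A.mulVec) (h : A = A' * E) : IsUnit E := by
  rw [← mulVec_injective_iff_isUnit]
  intro v w hvw
  apply hA
  rw [h, ← mulVec_mulVec, ← mulVec_mulVec, hvw]

theorem Matrix.mul_mul_transpose_cancel [Fintype m] [DecidableEq n] {A : Matrix m n K}
    {B : Matrix p n K} {X Y : Matrix n n K} (hA : Injective A.mulVec) (hB : Injective B.mulVec)
    (h : A * X * Bᵀ = A * Y * Bᵀ) : X = Y := by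
  obtain ⟨L, hL⟩ := exists_mul_eq_one_of_mulVec_injective hA
  obtain ⟨L', hL'⟩ := exists_mul_eq_one_of_mulVec_injective hB
  have cancel : ∀ Z : Matrix n n K, Z = L * (A * Z * Bᵀ) * L'ᵀ := fun Z => by
    rw [← Matrix.mul_assoc, ← Matrix.mul_assoc, hL, Matrix.one_mul, Matrix.mul_assoc,
      ← transpose_mul, hL', transpose_one, Matrix.mul_one]
  rw [cancel X, cancel Y, h]

end LinearAlgebra

theorem Matrix.exists_perm_of_smul_eq_smul {K V ι : Type*} [Field K] [AddCommGroup V]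
    [Module K V] [Fintype ι] [DecidableEq ι] {c c' : ι → V}
    (hc : Pairwise fun s s' => LinearIndepOn K c {s, s'}) (hc0 : ∀ s, c s ≠ 0)
    {P Q : Matrix ι ι K} (hP : IsUnit P) (h : ∀ t s, P t s • c s = Q t s • c' t) :
    ∃ σ : Equiv.Perm ι, (∀ t s, s ≠ σ t → P t s = 0 ∧ Q t s = 0) ∧
      ∀ t, P t (σ t) ≠ 0 ∧ Q t (σ t) ≠ 0 := by
  have hdet : P.det ≠ 0 := ((isUnit_iff_isUnit_det P).mp hP).ne_zero
  have hrow : ∀ t, ∃ s, P t s ≠ 0 := fun t => by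
    by_contra! h0
    exact hdet (det_eq_zero_of_row_eq_zero t h0)
  have hcol : ∀ s, ∃ t, P t s ≠ 0 := fun s => by
    by_contra! h0
    exact hdet (det_eq_zero_of_column_eq_zero s h0)
  have hc'0 : ∀ t, c' t ≠ 0 := fun t => by
    obtain ⟨s, hs⟩ := hrow t
    have := smul_ne_zero hs (hc0 s)
    rw [h] at this
    exact right_ne_zero_of_smul this
  have hPQ : ∀ t s, P t s = 0 ↔ Q t s = 0 := fun t s => by
    rw [← smul_eq_zero_iff_left (hc0 s), h, smul_eq_zero_iff_left (hc'0 t)]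
  have huniq : ∀ t s s', P t s ≠ 0 → P t s' ≠ 0 → s = s' := fun t s s' hs hs' => by
    by_contra hss'
    have hQs : Q t s ≠ 0 := (hPQ t s).not.mp hs
    have hs_eq : c' t = (P t s / Q t s) • c s := by
      rw [div_eq_inv_mul, mul_smul, h, smul_smul, inv_mul_cancel₀ hQs, one_smul]
    have hs'_eq : c s' = (Q t s' / P t s') • c' t := by
      rw [div_eq_inv_mul, mul_smul, ← h, smul_smul, inv_mul_cancel₀ hs', one_smul]
    refine (linearIndepOn_pair_iff c hss' (hc0 s)).mp (hc hss')
      (Q t s' / P t s' * (P t s / Q t s)) ?_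
    rw [hs'_eq, hs_eq, smul_smul]
  choose σ hσ using hrow
  have hσ_surj : Function.Surjective σ := fun s => by
    obtain ⟨t, ht⟩ := hcol s
    exact ⟨t, huniq t _ _ (hσ t) ht⟩
  refine ⟨Equiv.ofBijective σ (Finite.surjective_iff_bijective.mp hσ_surj), fun t s hs => ?_,
    fun t => ⟨hσ t, (hPQ t _).not.mp (hσ t)⟩⟩
  have hPs : P t s = 0 := by
    by_contra hPs
    exact hs (huniq t _ _ hPs (hσ t))
  exact ⟨hPs, (hPQ t s).mp hPs⟩

section KRank

variable {α β : Type*} [Fintype α] [Fintype β]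

theorem linearIndepOn_of_card_le_kRank (A : Matrix α β ℝ) {s : Finset β}
    (hs : s.card ≤ kRank A) : LinearIndepOn ℝ Aᵀ (s : Set β) := by
  classical
  have hmem : kRank A ∈ {k | k ≤ Fintype.card β ∧ ∀ s : Finset β, s.card = k →
      LinearIndependent ℝ fun j : s => fun i : α => A i j.1} := by
    refine Nat.sSup_mem ⟨0, Nat.zero_le _, fun s hs => ?_⟩
      ⟨Fintype.card β, fun k hk => hk.1⟩
    rw [Finset.card_eq_zero.mp hs]
    exact linearIndependent_empty_type
  obtain ⟨t, hst, ht⟩ := Finset.exists_superset_card_eq hs hmem.1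
  exact LinearIndepOn.mono (hmem.2 t ht) hst

theorem pairwise_linearIndepOn_of_two_le_kRank (A : Matrix α β ℝ) (h : 2 ≤ kRank A) :
    Pairwise fun s s' => LinearIndepOn ℝ Aᵀ {s, s'} := by
  classical
  intro s s' hss'
  simpa using linearIndepOn_of_card_le_kRank A ((Finset.card_pair hss').trans_le h)

theorem transpose_ne_zero_of_one_le_kRank (A : Matrix α β ℝ) (h : 1 ≤ kRank A) (s : β) :
    Aᵀ s ≠ 0 :=
  (linearIndepOn_of_card_le_kRank A (s := {s}) h).ne_zero (by simp)

end KRank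

def Matrix.khatriRao {J K R : Type*} (B : Matrix J R ℝ) (C : Matrix K R ℝ) :
    Matrix (J × K) R ℝ :=
  Matrix.of fun p r => B p.1 r * C p.2 r

theorem Matrix.khatriRao_mulVec_injective {J K R : Type*} [Fintype R] {B : Matrix J R ℝ}
    {C : Matrix K R ℝ} (hB : Injective B.mulVec) (hC : ∀ r, Cᵀ r ≠ 0) :
    Injective (khatriRao B C).mulVec := by
  rw [← coe_mulVecLin, ← LinearMap.ker_eq_bot, ker_mulVecLin_eq_bot_iff]
  intro g hg
  have hslice : ∀ k r, C k r * g r = 0 := fun k => by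
    refine congrFun (hB (a₂ := 0) ?_)
    ext j
    simpa [khatriRao, mulVec, dotProduct, mul_assoc, mul_comm, mul_left_comm]
      using congrFun hg (j, k)
  funext r
  by_contra hr
  exact hC r (funext fun k => (mul_eq_zero.mp (hslice k r)).resolve_right hr)

section CPD

variable {I J K R n : ℕ} (A : Matrix (Fin I) (Fin R) ℝ) (B : Matrix (Fin J) (Fin R) ℝ)
  (C : Matrix (Fin K) (Fin R) ℝ)

theorem mul_khatriRao_transpose_apply (i : Fin I) (j : Fin J) (k : Fin K) :
    (A * (khatriRao B C)ᵀ) i (j, k) = cpdTensor A B C i j k := by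
  simp only [mul_apply, transpose_apply, khatriRao, of_apply, cpdTensor, mul_assoc]

theorem cpdTensor_swap (i : Fin I) (j : Fin J) (k : Fin K) :
    cpdTensor A B C i j k = cpdTensor B A C j i k := by
  simp only [cpdTensor, mul_comm (A i _)]

theorem cpdTensor_eq_mul_diagonal_mul (i : Fin I) (j : Fin J) (k : Fin K) :
    cpdTensor A B C i j k = (A * diagonal (C k) * Bᵀ) i j := by
  rw [mul_apply]
  simp only [mul_diagonal, transpose_apply, cpdTensor, mul_right_comm _ (B j _)]

variable {A B C} {A' : Matrix (Fin I) (Fin n) ℝ} {B' : Matrix (Fin J) (Fin n) ℝ}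
  {C' : Matrix (Fin K) (Fin n) ℝ}

theorem exists_eq_mul_of_cpdTensor_eq (hB : Injective B.mulVec) (hC : ∀ r, Cᵀ r ≠ 0)
    (h : cpdTensor A B C = cpdTensor A' B' C') :
    ∃ E : Matrix (Fin n) (Fin R) ℝ, A = A' * E := by
  refine exists_eq_mul_of_mul_transpose_eq (M' := khatriRao B' C')
    (khatriRao_mulVec_injective hB hC) ?_
  ext i ⟨j, k⟩
  rw [mul_khatriRao_transpose_apply, mul_khatriRao_transpose_apply, h]

theorem le_of_cpdTensor_eq (hA : A.rank = R) (hB : Injective B.mulVec) (hC : ∀ r, Cᵀ r ≠ 0)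
    (h : cpdTensor A B C = cpdTensor A' B' C') : R ≤ n := by
  obtain ⟨E, rfl⟩ := exists_eq_mul_of_cpdTensor_eq hB hC h
  exact hA ▸ (rank_mul_le_left A' E).trans (rank_le_width A')

theorem tensorRank_cpdTensor (hA : A.rank = R) (hB : Injective B.mulVec)
    (hC : ∀ r, Cᵀ r ≠ 0) : tensorRank (cpdTensor A B C) = R := by
  refine le_antisymm (Nat.sInf_le ⟨A, B, C, rfl⟩) (le_csInf ⟨R, A, B, C, rfl⟩ ?_)
  rintro n ⟨A', B', C', h⟩
  exact le_of_cpdTensor_eq hA hB hC h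

end CPD

section CPDEquiv

variable {m n o ρ : Type*}

def CPDEquiv (A : Matrix m ρ ℝ) (B : Matrix n ρ ℝ) (C : Matrix o ρ ℝ)
    (A' : Matrix m ρ ℝ) (B' : Matrix n ρ ℝ) (C' : Matrix o ρ ℝ) : Prop :=
  ∃ (σ : Equiv.Perm ρ) (la lb lc : ρ → ℝ), (∀ r, la r * lb r * lc r = 1) ∧
    (∀ i r, A' i r = la r * A i (σ r)) ∧ (∀ j r, B' j r = lb r * B j (σ r)) ∧
    (∀ k r, C' k r = lc r * C k (σ r))

theorem Matrix.apply_eq_inv_mul_of_forall_eq_mul {X Y : Matrix m ρ ℝ}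
    {σ : Equiv.Perm ρ} {l : ρ → ℝ} (hl : ∀ r, l r ≠ 0)
    (h : ∀ i r, Y i r = l r * X i (σ r)) (i : m) (r : ρ) :
    X i r = (l (σ.symm r))⁻¹ * Y i (σ.symm r) := by
  rw [h, σ.apply_symm_apply, inv_mul_cancel_left₀ (hl _)]

variable {A A' A'' : Matrix m ρ ℝ} {B B' B'' : Matrix n ρ ℝ} {C C' C'' : Matrix o ρ ℝ}

theorem CPDEquiv.symm (h : CPDEquiv A B C A' B' C') : CPDEquiv A' B' C' A B C := by
  obtain ⟨σ, la, lb, lc, hl, hA, hB, hC⟩ := h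
  have hne : ∀ r, la r ≠ 0 ∧ lb r ≠ 0 ∧ lc r ≠ 0 := fun r => by
    have := hl r
    refine ⟨?_, ?_, ?_⟩ <;> rintro h0 <;> simp [h0] at this
  refine ⟨σ.symm, fun r => (la (σ.symm r))⁻¹, fun r => (lb (σ.symm r))⁻¹,
    fun r => (lc (σ.symm r))⁻¹, fun r => by simp only [← mul_inv, hl, inv_one],
    apply_eq_inv_mul_of_forall_eq_mul (fun r => (hne r).1) hA,
    apply_eq_inv_mul_of_forall_eq_mul (fun r => (hne r).2.1) hB,
    apply_eq_inv_mul_of_forall_eq_mul (fun r => (hne r).2.2) hC⟩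

theorem CPDEquiv.trans (h : CPDEquiv A B C A' B' C') (h' : CPDEquiv A' B' C' A'' B'' C'') :
    CPDEquiv A B C A'' B'' C'' := by
  obtain ⟨σ, la, lb, lc, hl, hA, hB, hC⟩ := h
  obtain ⟨τ, la', lb', lc', hl', hA', hB', hC'⟩ := h'
  refine ⟨τ.trans σ, fun r => la' r * la (τ r), fun r => lb' r * lb (τ r),
    fun r => lc' r * lc (τ r), fun r => ?_, fun i r => ?_, fun j r => ?_, fun k r => ?_⟩
  · linear_combination la (τ r) * lb (τ r) * lc (τ r) * hl' r + hl (τ r)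
  · rw [hA', hA, mul_assoc]; rfl
  · rw [hB', hB, mul_assoc]; rfl
  · rw [hC', hC, mul_assoc]; rfl

end CPDEquiv

section Uniqueness

variable {I J K R : ℕ} {A A' : Matrix (Fin I) (Fin R) ℝ} {B B' : Matrix (Fin J) (Fin R) ℝ}
  {C C' : Matrix (Fin K) (Fin R) ℝ}

theorem exists_mul_diagonal_eq_diagonal_mul (hA : Injective A.mulVec) (hB : Injective B.mulVec)
    (hC : ∀ r, Cᵀ r ≠ 0) (h : cpdTensor A B C = cpdTensor A' B' C') :
    ∃ P Q : Matrix (Fin R) (Fin R) ℝ, IsUnit P ∧ A = A' * P ∧ B' = B * Qᵀ ∧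
      ∀ k, P * diagonal (C k) = diagonal (C' k) * Q := by
  obtain ⟨P, hAP⟩ := exists_eq_mul_of_cpdTensor_eq hB hC h
  obtain ⟨G, hBG⟩ := exists_eq_mul_of_cpdTensor_eq (A := B) (B := A) (A' := B') (B' := A')
    (C' := C') hA hC (by ext j i k; rw [← cpdTensor_swap A, ← cpdTensor_swap A', h])
  have hP : IsUnit P := isUnit_of_eq_mul hA hAP
  have hPdet : IsUnit P.det := (isUnit_iff_isUnit_det P).mp hP
  have hGdet : IsUnit G.det := (isUnit_iff_isUnit_det G).mp (isUnit_of_eq_mul hB hBG)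
  have hA' : A' = A * P⁻¹ := by rw [hAP, mul_nonsing_inv_cancel_right _ _ hPdet]
  have hB' : B' = B * G⁻¹ := by rw [hBG, mul_nonsing_inv_cancel_right _ _ hGdet]
  refine ⟨P, (G⁻¹)ᵀ, hP, hAP, by rw [transpose_transpose, hB'], fun k => ?_⟩
  have hslice : diagonal (C k) = P⁻¹ * diagonal (C' k) * (G⁻¹)ᵀ := by
    refine mul_mul_transpose_cancel hA hB ?_
    ext i j
    rw [← cpdTensor_eq_mul_diagonal_mul, h, cpdTensor_eq_mul_diagonal_mul, hA', hB',
      transpose_mul]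
    simp only [Matrix.mul_assoc]
  rw [hslice, ← Matrix.mul_assoc, ← Matrix.mul_assoc, mul_nonsing_inv _ hPdet, Matrix.one_mul]

theorem cpdEquiv_of_cpdTensor_eq (hA : Injective A.mulVec) (hB : Injective B.mulVec)
    (hC : Pairwise fun s s' => LinearIndepOn ℝ Cᵀ {s, s'}) (hC0 : ∀ r, Cᵀ r ≠ 0)
    (h : cpdTensor A B C = cpdTensor A' B' C') : CPDEquiv A B C A' B' C' := by
  obtain ⟨P, Q, hP, hAP, hBQ, hPQ⟩ := exists_mul_diagonal_eq_diagonal_mul hA hB hC0 h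
  have hrel : ∀ t s, P t s • Cᵀ s = Q t s • C'ᵀ t := fun t s => by
    ext k
    simpa [mul_comm] using congrFun (congrFun (hPQ k) t) s
  obtain ⟨σ, hσ0, hσ⟩ := exists_perm_of_smul_eq_smul hC hC0 hP hrel
  refine ⟨σ, fun r => (P r (σ r))⁻¹, fun r => Q r (σ r), fun r => P r (σ r) / Q r (σ r),
    fun r => ?_, fun i r => ?_, fun j r => ?_, fun k r => ?_⟩
  · field_simp [(hσ r).1, (hσ r).2]
  · have hAr : A i (σ r) = A' i r * P r (σ r) := by
      rw [hAP, mul_apply, Finset.sum_eq_single r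
        (fun t _ htr => by rw [(hσ0 t (σ r) (σ.injective.ne (Ne.symm htr))).1, mul_zero])
        (by simp)]
    rw [hAr, mul_comm (A' i r), inv_mul_cancel_left₀ (hσ r).1]
  · rw [hBQ, mul_apply, Finset.sum_eq_single (σ r)
      (fun s _ hs => by rw [transpose_apply, (hσ0 r s hs).2, mul_zero]) (by simp),
      transpose_apply, mul_comm]
  · have hk := congrFun (hrel r (σ r)) k
    simp only [Pi.smul_apply, transpose_apply, smul_eq_mul] at hk
    field_simp [(hσ r).2]
    linear_combination -hk

theorem cpdUnique_cpdTensor (hA : Injective A.mulVec) (hB : Injective B.mulVec)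
    (hC : Pairwise fun s s' => LinearIndepOn ℝ Cᵀ {s, s'}) (hC0 : ∀ r, Cᵀ r ≠ 0) :
    cpdUnique R (cpdTensor A B C) :=
  fun _ _ _ _ _ _ h₁ h₂ => (cpdEquiv_of_cpdTensor_eq hA hB hC hC0 h₁).symm.trans
    (cpdEquiv_of_cpdTensor_eq hA hB hC hC0 h₂)

end Uniqueness

/-- If `A` and `B` have full column rank and `k_C ≥ 2`, then the rank of
`T = [A,B,C]_R` equals `R` and the CPD of `T` is unique. -/
theorem stmt0 {I J K R : ℕ} (A : Matrix (Fin I) (Fin R) ℝ) (B : Matrix (Fin J) (Fin R) ℝ)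
    (C : Matrix (Fin K) (Fin R) ℝ)
    (hA : A.rank = R) (hB : B.rank = R) (hC : 2 ≤ kRank C) :
    tensorRank (cpdTensor A B C) = R ∧ cpdUnique R (cpdTensor A B C) := by
  have hA' : Injective A.mulVec := mulVec_injective_of_rank_eq_card (by rwa [Fintype.card_fin])
  have hB' : Injective B.mulVec := mulVec_injective_of_rank_eq_card (by rwa [Fintype.card_fin])
  have hC0 : ∀ r, Cᵀ r ≠ 0 := transpose_ne_zero_of_one_le_kRank C (by omega)
  exact ⟨tensorRank_cpdTensor hA hB' hC0,
    cpdUnique_cpdTensor hA' hB' (pairwise_linearIndepOn_of_two_le_kRank C hC) hC0⟩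
end
end

section
/- Let C ∈ ℝ^{K×R} with K ≤ R, set m := R − K + 2, and suppose the k-rank of C satisfies k_C ≥ K − 1. Then the K^m × C(R,m) matrix R_m(C) has full column rank C(R,m). -/
open scoped BigOperators

noncomputable section

/-- The permanent of a square matrix. -/
def permanent {n : ℕ} (A : Matrix (Fin n) (Fin n) ℝ) : ℝ :=
  ∑ σ : Equiv.Perm (Fin n), ∏ i, A i (σ i)

/-- The matrix `R_m(C)`: rows are indexed by tuples `(i_1,…,i_m) ∈ {1,…,K}^m`, columns by
`m`-element subsets `{j_1 < … < j_m}` of the columns of `C`, and the corresponding entry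
is the permanent of the `m × m` submatrix of `C` on rows `i_1,…,i_m` and columns
`j_1,…,j_m`. -/
def Rmat {K R : ℕ} (m : ℕ) (C : Matrix (Fin K) (Fin R) ℝ) :
    Matrix (Fin m → Fin K) {t : Finset (Fin R) // t.card = m} ℝ :=
  Matrix.of fun i t =>
    permanent (Matrix.of fun a b : Fin m => C (i a) (t.1.orderIsoOfFin t.2 b : Fin R))

/-! Pairing the column of `R_m(C)` indexed by `t` with the symmetric tensor `x ⊗ ⋯ ⊗ x` gives
`m! ∏_{j ∈ t} ℓ_j(x)`, where `ℓ_j = ⟨c_j, ·⟩` is the linear form of the `j`-th column of `C`. So it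
suffices that the products `∏_{j ∈ t} ℓ_j` over the `m`-subsets `t` are linearly independent
functions, which goes by induction on the number of forms; both reductions below preserve
`#forms + 2 ≤ m + dim`. Given a relation, restrict it to the hyperplane `ℓ_r = 0`: the terms with
`r ∈ t` vanish, and the restricted forms, living in dimension `K - 1`, still have every `K - 2` of
them independent, so the terms with `r ∉ t` have zero coefficients. What remains is `ℓ_r` times a
relation among products of `m - 1` forms, and `ℓ_r` can be cancelled because these functions are
continuous along lines. -/

open Finset Module

section Dual

variable {𝕜 V ι : Type*} [Field 𝕜] [AddCommGroup V] [Module 𝕜 V]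

theorem Module.Dual.mem_span_singleton_of_ker_le_ker {ℓ f : Dual 𝕜 V}
    (h : LinearMap.ker ℓ ≤ LinearMap.ker f) : f ∈ 𝕜 ∙ ℓ := by
  simpa using mem_span_of_iInf_ker_le_ker (L := fun _ : Unit => ℓ) (by simpa using h)

theorem LinearIndepOn.dualRestrict_ker {ℓ : ι → Dual 𝕜 V} {r : ι} {T : Set ι} (hr : r ∉ T)
    (h : LinearIndepOn 𝕜 ℓ (insert r T)) :
    LinearIndepOn 𝕜 (fun j => (LinearMap.ker (ℓ r)).dualRestrict (ℓ j)) T := by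
  rw [linearIndepOn_insert hr, Set.image_eq_range] at h
  refine h.1.map (Disjoint.mono_right ?_ (Submodule.disjoint_span_singleton_of_notMem h.2))
  rw [Submodule.dualRestrict_ker_eq_dualAnnihilator]
  exact fun f hf => Dual.mem_span_singleton_of_ker_le_ker fun x hx =>
    (Submodule.mem_dualAnnihilator f).mp hf x hx

theorem forall_linearIndepOn_dualRestrict_ker [FiniteDimensional 𝕜 V] [DecidableEq ι]
    {ℓ : ι → Dual 𝕜 V} {r : ι} {S : Finset ι} (hr : r ∉ S) (hℓr : ℓ r ≠ 0)
    (hℓ : ∀ T ⊆ insert r S, #T < finrank 𝕜 V → LinearIndepOn 𝕜 ℓ (T : Set ι)) :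
    ∀ T ⊆ S, #T < finrank 𝕜 (LinearMap.ker (ℓ r)) →
      LinearIndepOn 𝕜 (fun j => (LinearMap.ker (ℓ r)).dualRestrict (ℓ j)) (T : Set ι) := by
  intro T hT hTK
  have hrT : r ∉ (T : Set ι) := fun h => hr (hT h)
  refine LinearIndepOn.dualRestrict_ker hrT ?_
  rw [← coe_insert]
  refine hℓ (insert r T) (insert_subset_insert r hT) ?_
  rw [card_insert_of_notMem hrT, ← Dual.finrank_ker_add_one_of_ne_zero hℓr]
  omega

end Dual

theorem Module.Dual.eq_zero_of_forall_mul_eq_zero {V : Type*} [AddCommGroup V] [Module ℝ V]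
    {ℓ : Dual ℝ V} (hℓ : ℓ ≠ 0) {f : V → ℝ} (hf : ∀ x v, Continuous fun ε : ℝ => f (x + ε • v))
    (h : ∀ x, ℓ x * f x = 0) (x : V) : f x = 0 := by
  obtain ⟨v, hv⟩ : ∃ v, ℓ v ≠ 0 := by simpa [DFunLike.ext_iff] using hℓ
  have hline : Set.EqOn (fun ε : ℝ => f (x + ε • v)) (fun _ => 0) {-(ℓ x / ℓ v)}ᶜ :=
    fun ε hε => (mul_eq_zero.mp (h _)).resolve_left fun h0 => hε <| by
      rw [map_add, map_smul, smul_eq_mul] at h0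
      rw [Set.mem_singleton_iff]
      field_simp
      linarith
  simpa using congrFun ((hf x v).ext_on (dense_compl_singleton _) continuous_const hline) 0

section PowersetCard

variable {ι : Type*} [DecidableEq ι] {r : ι} {S : Finset ι}

theorem Finset.sum_powersetCard_succ_insert {M : Type*} [AddCommMonoid M] (hr : r ∉ S) (n : ℕ)
    (f : Finset ι → M) :
    ∑ t ∈ (insert r S).powersetCard (n + 1), f t =
      ∑ t ∈ S.powersetCard (n + 1), f t + ∑ t ∈ S.powersetCard n, f (insert r t) := by
  have hrt : ∀ t ∈ S.powersetCard n, r ∉ t := fun t ht hrt =>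
    hr ((mem_powersetCard.mp ht).1 hrt)
  rw [powersetCard_succ_insert hr, sum_union, sum_image]
  · intro t ht u hu htu
    rw [← erase_insert (hrt t ht), ← erase_insert (hrt u hu)]
    exact congrArg (·.erase r) htu
  · refine disjoint_left.mpr fun t ht htu => ?_
    obtain ⟨u, -, rfl⟩ := mem_image.mp htu
    exact hr ((mem_powersetCard.mp ht).1 (mem_insert_self r u))

theorem Finset.sum_mul_prod_powersetCard_succ_insert {R : Type*} [CommSemiring R] (hr : r ∉ S)
    (n : ℕ) (c : Finset ι → R) (f : ι → R) :
    ∑ t ∈ (insert r S).powersetCard (n + 1), c t * ∏ j ∈ t, f j =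
      ∑ t ∈ S.powersetCard (n + 1), c t * ∏ j ∈ t, f j +
        f r * ∑ t ∈ S.powersetCard n, c (insert r t) * ∏ j ∈ t, f j := by
  rw [sum_powersetCard_succ_insert hr, mul_sum]
  congr 1
  refine sum_congr rfl fun t ht => ?_
  rw [prod_insert fun hrt => hr ((mem_powersetCard.mp ht).1 hrt)]
  ring

end PowersetCard

section ProductsOfLinearForms

variable {V ι : Type*} [AddCommGroup V] [Module ℝ V]

theorem linearIndepOn_prod_dual_powersetCard_zero (ℓ : ι → Dual ℝ V) (S : Finset ι) :
    LinearIndepOn ℝ (fun t x => ∏ j ∈ t, ℓ j x) (S.powersetCard 0 : Set (Finset ι)) := by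
  simp only [powersetCard_zero, coe_singleton, linearIndepOn_singleton_iff, prod_empty]
  exact one_ne_zero

theorem linearIndepOn_prod_dual_powersetCard [DecidableEq ι] [FiniteDimensional ℝ V]
    (ℓ : ι → Dual ℝ V) (S : Finset ι) (m : ℕ) (hm : #S + 2 ≤ m + finrank ℝ V)
    (hℓ : ∀ T ⊆ S, #T < finrank ℝ V → LinearIndepOn ℝ ℓ (T : Set ι)) :
    LinearIndepOn ℝ (fun t x => ∏ j ∈ t, ℓ j x) (S.powersetCard m : Set (Finset ι)) := by
  induction S using Finset.induction_on generalizing V m with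
  | empty =>
    rcases m with _ | m
    · exact linearIndepOn_prod_dual_powersetCard_zero ℓ ∅
    · simp [powersetCard_eq_empty.mpr (by simp : #(∅ : Finset ι) < m + 1)]
  | insert r S hr ih =>
    rcases m with _ | m
    · exact linearIndepOn_prod_dual_powersetCard_zero ℓ _
    rw [card_insert_of_notMem hr] at hm
    by_cases hmS : #S < m
    · simp [powersetCard_eq_empty.mpr (by rw [card_insert_of_notMem hr]; omega :
        #(insert r S) < m + 1)]
    have hℓr : ℓ r ≠ 0 := (linearIndepOn_singleton_iff ℝ).mp <| by
      simpa using hℓ {r} (by simp) (by simp; omega)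
    have hW := Dual.finrank_ker_add_one_of_ne_zero hℓr
    rw [linearIndepOn_finset_iff]
    intro c hc
    have hsplit (x : V) : ∑ t ∈ S.powersetCard (m + 1), c t * ∏ j ∈ t, ℓ j x +
        ℓ r x * ∑ t ∈ S.powersetCard m, c (insert r t) * ∏ j ∈ t, ℓ j x = 0 := by
      rw [← sum_mul_prod_powersetCard_succ_insert hr]
      simpa using congrFun hc x
    have hA : ∀ t ∈ S.powersetCard (m + 1), c t = 0 :=
      linearIndepOn_finset_iff.mp (ih _ (m + 1) (by omega)
        (forall_linearIndepOn_dualRestrict_ker hr hℓr hℓ)) c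
        (funext fun x => by simpa [x.2] using hsplit x)
    have hB : ∀ t ∈ S.powersetCard m, c (insert r t) = 0 := by
      refine linearIndepOn_finset_iff.mp (ih ℓ m (by omega) fun T hT => hℓ T
        (hT.trans (subset_insert r S))) (c ∘ insert r) (funext fun x => ?_)
      simp only [Finset.sum_apply, Pi.smul_apply, smul_eq_mul, Pi.zero_apply, Function.comp]
      refine Dual.eq_zero_of_forall_mul_eq_zero hℓr
        (f := fun x => ∑ t ∈ S.powersetCard m, c (insert r t) * ∏ j ∈ t, ℓ j x)
        (fun x v => ?_) (fun x => ?_) x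
      · simp only [map_add, map_smul, smul_eq_mul]
        fun_prop
      · have h := hsplit x
        rwa [sum_eq_zero fun t ht => by rw [hA t ht, zero_mul], zero_add] at h
    intro t ht
    rw [powersetCard_succ_insert hr, mem_union, mem_image] at ht
    rcases ht with ht | ⟨t, ht, rfl⟩
    exacts [hA t ht, hB t ht]

end ProductsOfLinearForms

theorem sum_prod_mul_permanent {K m : ℕ} (M : Matrix (Fin K) (Fin m) ℝ) (x : Fin K → ℝ) :
    ∑ i : Fin m → Fin K, (∏ a, x (i a)) * permanent (Matrix.of fun a b => M (i a) b) =
      m.factorial * ∏ b, ∑ k, M k b * x k := by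
  simp only [permanent, Matrix.of_apply, mul_sum]
  rw [sum_comm]
  have h (σ : Equiv.Perm (Fin m)) :
      ∑ i : Fin m → Fin K, (∏ a, x (i a)) * ∏ a, M (i a) (σ a) = ∏ b, ∑ k, M k b * x k := by
    rw [← Equiv.prod_comp σ, Fintype.prod_sum]
    exact sum_congr rfl fun i _ => by rw [← prod_mul_distrib]; simp only [mul_comm]
  simp [h, Fintype.card_perm]

theorem sum_prod_mul_Rmat {K R m : ℕ} (C : Matrix (Fin K) (Fin R) ℝ) (x : Fin K → ℝ)
    (t : {t : Finset (Fin R) // #t = m}) :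
    ∑ i : Fin m → Fin K, (∏ a, x (i a)) * Rmat m C i t =
      m.factorial * ∏ j ∈ t.1, ∑ k, C k j * x k := by
  refine (sum_prod_mul_permanent (Matrix.of fun k b => C k (t.1.orderIsoOfFin t.2 b)) x).trans ?_
  rw [← prod_coe_sort t.1]
  congr 1
  exact Equiv.prod_comp (t.1.orderIsoOfFin t.2).toEquiv fun j => ∑ k, C k j * x k

theorem linearIndependent_col_Rmat {K R m : ℕ} (C : Matrix (Fin K) (Fin R) ℝ)
    (h : LinearIndepOn ℝ (fun t x => ∏ j ∈ t, C.col j ⬝ᵥ x)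
      ((univ : Finset (Fin R)).powersetCard m : Set (Finset (Fin R)))) :
    LinearIndependent ℝ (Rmat m C).col := by
  let X : Matrix (Fin K → ℝ) (Fin m → Fin K) ℝ := Matrix.of fun x i => ∏ a, x (i a)
  have hX : X.mulVecLin ∘ (Rmat m C).col =
      fun t => (m.factorial : ℝ) • fun x => ∏ j ∈ t.1, C.col j ⬝ᵥ x := by
    funext t x
    simpa [X, Matrix.mulVec, dotProduct] using sum_prod_mul_Rmat C x t
  refine LinearIndependent.of_comp X.mulVecLin (hX ▸ ?_)
  have h' := h.comp (fun t : {t : Finset (Fin R) // #t = m} => ⟨t.1, by simp [t.2]⟩)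
    fun t u htu => Subtype.ext (congrArg Subtype.val htu :)
  exact h'.units_smul fun _ => Units.mk0 _ (by positivity)

theorem linearIndepOn_col_of_card_le_kRank {α β : Type*} [Fintype α] [Fintype β]
    (A : Matrix α β ℝ) {T : Finset β} (hT : #T ≤ kRank A) :
    LinearIndepOn ℝ A.col (T : Set β) := by
  have hmem : kRank A ∈ {k | k ≤ Fintype.card β ∧ ∀ s : Finset β, #s = k →
      LinearIndependent ℝ fun j : s => fun i : α => A i j.1} :=
    Nat.sSup_mem ⟨0, Nat.zero_le _, fun s hs => by
      rw [card_eq_zero.mp hs]; exact linearIndependent_empty_type⟩ ⟨_, fun _ hk => hk.1⟩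
  obtain ⟨s, hTs, -, hs⟩ := exists_subsuperset_card_eq (subset_univ T) hT (by simpa using hmem.1)
  exact LinearIndepOn.mono (hmem.2 s hs) (coe_subset.mpr hTs)

/-- If `K ≤ R`, `m := R − K + 2` and `k_C ≥ K − 1`, then the
`K^m × C(R,m)` matrix `R_m(C)` has full column rank `C(R,m)`. -/
theorem stmt12 {K R m : ℕ} (C : Matrix (Fin K) (Fin R) ℝ) (hKR : K ≤ R)
    (hm : m = R - K + 2) (hC : K - 1 ≤ kRank C) :
    (Rmat m C).rank = Nat.choose R m := by
  let ℓ (j : Fin R) : Dual ℝ (Fin K → ℝ) := dotProductEquiv ℝ (Fin K) (C.col j)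
  have hℓ (T : Finset (Fin R)) (hT : #T < K) : LinearIndepOn ℝ ℓ T :=
    (linearIndepOn_col_of_card_le_kRank C (by omega)).map' _ (dotProductEquiv ℝ (Fin K)).ker
  have hprod := linearIndepOn_prod_dual_powersetCard ℓ univ m (by simp; omega)
    fun T _ hT => hℓ T (by simpa using hT)
  rw [Matrix.rank_eq_finrank_span_cols, finrank_span_eq_card (linearIndependent_col_Rmat C hprod),
    Fintype.card_finset_len, Fintype.card_fin]
end
end

section
/- Let C ∈ ℝ^{K×R} have k-rank k := k_C ≥ 1. Then the set {X ∈ ℝ^{k×K} : k_{XC} < k} has Lebesgue measure zero in ℝ^{k×K} ≅ ℝ^{kK}; consequently, for almost every X ∈ ℝ^{k×K} the k-rank of the k×R matrix XC equals k_C. -/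
open scoped BigOperators
open MeasureTheory

noncomputable section

/-!
For a `k`-set `s` of columns of `C` (linearly independent, as `k = k_C`), the columns of `XC`
indexed by `s` form the square matrix `X C_s`. Since `C_s` has a left inverse, `X ↦ X C_s` is a
surjective linear map, so it pulls the null set `{det = 0}` back to a null set. A finite union over
`s` gives `k_{XC} ≥ k` almost everywhere, while `k_{XC} ≤ k_C` holds for every `X`.
-/

open Matrix

section KRank

variable {α β : Type*} [Fintype α] [Fintype β]

lemma kRank_spec (A : Matrix α β ℝ) :
    kRank A ≤ Fintype.card β ∧ ∀ s : Finset β, s.card = kRank A →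
      LinearIndependent ℝ (A.submatrix id ((↑) : s → β)).col := by
  refine Nat.sSup_mem (s := {k | k ≤ Fintype.card β ∧ ∀ s : Finset β, s.card = k →
    LinearIndependent ℝ fun j : s => fun i : α => A i j.1})
    ⟨0, Nat.zero_le _, fun s hs => ?_⟩ ⟨Fintype.card β, fun _ hk => hk.1⟩
  obtain rfl := Finset.card_eq_zero.1 hs
  exact linearIndependent_empty_type

lemma le_kRank {A : Matrix α β ℝ} {k : ℕ} (hk : k ≤ Fintype.card β)
    (hA : ∀ s : Finset β, s.card = k → LinearIndependent ℝ (A.submatrix id ((↑) : s → β)).col) :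
    k ≤ kRank A :=
  le_csSup ⟨Fintype.card β, fun _ hk => hk.1⟩ ⟨hk, hA⟩

lemma kRank_mul_le {γ : Type*} [Fintype γ] (X : Matrix α γ ℝ) (C : Matrix γ β ℝ) :
    kRank (X * C) ≤ kRank C := by
  obtain ⟨hcard, hXC⟩ := kRank_spec (X * C)
  refine le_kRank hcard fun s hs => LinearIndependent.of_comp X.mulVecLin ?_
  convert hXC s hs using 1
  ext j i
  simp [mulVec, dotProduct, mul_apply]

end KRank

lemma finite_setOf_det_add_smul_one_eq_zero {n R : Type*} [Fintype n] [DecidableEq n]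
    [CommRing R] [IsDomain R] (A : Matrix n n R) :
    {t : R | (A + t • 1).det = 0}.Finite := by
  refine (Polynomial.finite_setOfPred_isRoot (-A).charpoly_monic.ne_zero).subset fun t ht => ?_
  rwa [Set.mem_ofPred_eq, Polynomial.IsRoot.def, eval_charpoly, sub_neg_eq_add, add_comm,
    scalar_apply, ← smul_one_eq_diagonal]

section Det

variable {n : Type*} [Fintype n] [DecidableEq n]

lemma measurableSet_setOf_det_ne_zero :
    MeasurableSet {M : n → n → ℝ | (of M).det ≠ 0} := by
  have hdet : Continuous fun M : n → n → ℝ => (of M).det := continuous_id.matrix_det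
  exact (hdet.measurable (measurableSet_singleton 0)).compl

/-- On each line `t ↦ M + t • 1` the determinant is a characteristic polynomial in `t`, so it
vanishes only finitely often; disintegrating along these lines gives the claim. -/
lemma ae_det_ne_zero : ∀ᵐ M : n → n → ℝ, (of M).det ≠ 0 := by
  refine (ae_ae_add_linearMap_mem_iff (LinearMap.toSpanSingleton ℝ _ (of.symm 1)) volume volume
    measurableSet_setOf_det_ne_zero).1 (ae_of_all _ fun M => ae_iff.2 ?_)
  refine measure_mono_null (fun t ht => ?_)
    ((finite_setOf_det_add_smul_one_eq_zero (of M)).measure_zero volume)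
  exact not_not.1 ht

end Det

lemma exists_mul_eq_one_of_linearIndependent_col {m n K : Type*} [Fintype m] [Fintype n]
    [DecidableEq n] [Field K] {D : Matrix m n K} (hD : LinearIndependent K D.col) :
    ∃ G : Matrix n m K, G * D = 1 := by
  classical
  obtain ⟨g, hg⟩ := D.mulVecLin.exists_leftInverse_of_injective
    (LinearMap.ker_eq_bot.2 (mulVec_injective_iff.2 hD))
  refine ⟨LinearMap.toMatrix' g, toLin'.injective ?_⟩
  rw [toLin'_mul, toLin'_toMatrix', toLin'_apply', hg, toLin'_one]

lemma ae_isUnit_mul_of_linearIndependent_col {m n : Type*} [Fintype m] [Fintype n]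
    [DecidableEq n] {D : Matrix m n ℝ} (hD : LinearIndependent ℝ D.col) :
    ∀ᵐ X : n → m → ℝ, IsUnit (of X * D) := by
  obtain ⟨G, hG⟩ := exists_mul_eq_one_of_linearIndependent_col hD
  have hsurj : Function.Surjective (mulRightLinearMap n ℝ D) :=
    fun M => ⟨M * G, by simp [Matrix.mul_assoc, hG]⟩
  filter_upwards [(ae_comp_linearMap_mem_iff
    (mulRightLinearMap n ℝ D : (n → m → ℝ) →ₗ[ℝ] n → n → ℝ) volume volume hsurj
    measurableSet_setOf_det_ne_zero).2 ae_det_ne_zero] with X hX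
  exact (isUnit_iff_isUnit_det _).2 (isUnit_iff_ne_zero.2 hX)

lemma ae_linearIndependent_col_mul {m n ι : Type*} [Fintype m] [Fintype n] [Fintype ι]
    (hcard : Fintype.card ι = Fintype.card n) {D : Matrix m ι ℝ}
    (hD : LinearIndependent ℝ D.col) :
    ∀ᵐ X : n → m → ℝ, LinearIndependent ℝ (of X * D).col := by
  classical
  let e : n ≃ ι := Fintype.equivOfCardEq hcard.symm
  filter_upwards [ae_isUnit_mul_of_linearIndependent_col
    (D := D.submatrix id e) (hD.comp e e.injective)] with X hX
  exact (linearIndependent_equiv e).1 (linearIndependent_cols_iff_isUnit.2 hX)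

theorem stmt19_general {K R : ℕ} (C : Matrix (Fin K) (Fin R) ℝ) :
    volume {X : Fin (kRank C) → Fin K → ℝ | kRank (Matrix.of X * C) < kRank C} = 0 ∧
    ∀ᵐ X : Fin (kRank C) → Fin K → ℝ ∂volume, kRank (Matrix.of X * C) = kRank C := by
  obtain ⟨hcard, hC⟩ := kRank_spec C
  have hcols : ∀ᵐ X : Fin (kRank C) → Fin K → ℝ, ∀ s : Finset (Fin R), s.card = kRank C →
      LinearIndependent ℝ ((of X * C).submatrix id ((↑) : s → Fin R)).col := by
    refine ae_all_iff.2 fun s => ?_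
    by_cases hs : s.card = kRank C
    · filter_upwards [ae_linearIndependent_col_mul (by simpa using hs) (hC s hs)] with X hX _ using hX
    · exact ae_of_all _ fun X hs' => absurd hs' hs
  have hae : ∀ᵐ X : Fin (kRank C) → Fin K → ℝ, kRank (of X * C) = kRank C :=
    hcols.mono fun X hX => (kRank_mul_le _ _).antisymm (le_kRank hcard hX)
  exact ⟨measure_mono_null (fun X hX => hX.ne) (ae_iff.1 hae), hae⟩

/-- Let `C ∈ ℝ^{K×R}` have k-rank `k := k_C ≥ 1`.  Then the set
`{X ∈ ℝ^{k×K} : k_{XC} < k}` has Lebesgue measure zero (identifying `ℝ^{k×K}` with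
`ℝ^{kK}`); consequently, for almost every `X ∈ ℝ^{k×K}` the k-rank of the `k × R` matrix
`XC` equals `k_C`. -/
theorem stmt19 {K R : ℕ} (C : Matrix (Fin K) (Fin R) ℝ) (h1 : 1 ≤ kRank C) :
    volume {X : Fin (kRank C) → Fin K → ℝ | kRank (Matrix.of X * C) < kRank C} = 0 ∧
    ∀ᵐ X : Fin (kRank C) → Fin K → ℝ ∂volume, kRank (Matrix.of X * C) = kRank C :=
  stmt19_general C
end
end
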